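/- Let h and m be positive integers, let G be a colored 𝔯-partite graph on Ω, let S ∈ S_{h,G}, and for each I ∈ binom(𝔯,2) and each e ∈ 𝕍_I(S) let F_e : C_I(G) → [−1,1] be a function; abbreviate F_e(G(e')) by F_e(e') for e' ∈ Ω_I. Then for every I ∈ binom(𝔯,2) and every e₀ ∈ 𝕍_I(S): ( E_{φ∈Φ(h)}[ ∏_{e∈𝕍₂(S)} F_e(φ(e)) · ∏_{v∈𝕍₁(S)} 𝟙[G(φ(v)) = S(v)] ] )² ≤ E_{ψ∈Φ(mh)} E_{e*∈Ω_I}[ ( E_{e∈Ω_I}[ F_{e₀}(e) · 𝟙[G(∂e) = S(∂e₀)] | e ≈_{∂(G/ψ)} e* ] )² ] · ( ∏_{v∈𝕍₁(S)} d_G(S⟨v⟩) ) · ( ( ∏_{v∈𝕍₁(S), v∉e₀} d_G(S⟨v⟩) ) + 1/m ), where φ ∈ Φ(h) and ψ ∈ Φ(mh) are random and 𝟙[·] denotes the Iverson bracket. -/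

import Mathlib

open Finset
open scoped BigOperators Classical

/-! ## Framework: colored partite graphs, complexes, partitionwise maps,
regularization, relative densities and regularity (Ishigami's setting). -/

/-- Partitionwise maps `Φ(h)`: `h` sample vertices in each of the `r` parts. -/
abbrev PMap {r : ℕ} (Ω : Fin r → Type) (h : ℕ) : Type := ∀ i : Fin r, Fin h → Ω i

/-- The product weight of a partitionwise map (each sample independent). -/
noncomputable def pmapWeight {r : ℕ} (Ω : Fin r → Type) [∀ i, Fintype (Ω i)]
    (w : ∀ i, Ω i → ℝ) {h : ℕ} (φ : PMap Ω h) : ℝ :=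
  ∏ i : Fin r, ∏ a : Fin h, w i (φ i a)

/-- Expectation over a random partitionwise map in `Φ(h)`. -/
noncomputable def EPhi {r : ℕ} (Ω : Fin r → Type) [∀ i, Fintype (Ω i)]
    (w : ∀ i, Ω i → ℝ) (h : ℕ) (f : PMap Ω h → ℝ) : ℝ :=
  ∑ φ : PMap Ω h, pmapWeight Ω w φ * f φ

/-- Conditional expectation over a random partitionwise map in `Φ(h)`. -/
noncomputable def EPhiCond {r : ℕ} (Ω : Fin r → Type) [∀ i, Fintype (Ω i)]
    (w : ∀ i, Ω i → ℝ) (h : ℕ) (A : PMap Ω h → Prop) (f : PMap Ω h → ℝ) : ℝ :=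
  (∑ φ : PMap Ω h, if A φ then pmapWeight Ω w φ * f φ else 0) /
  (∑ φ : PMap Ω h, if A φ then pmapWeight Ω w φ else 0)

/-- A colored `𝔯`-partite graph on vertex sets `Ω i`: color sets `C1 i` (for vertices,
i.e. index-`{i}` edges) and `C2 i j` (for index-`{i,j}` edges), together with coloring
maps, symmetric in the two endpoints. -/
structure CGraph {r : ℕ} (Ω : Fin r → Type) (K₁ K₂ : Type) where
  C1 : Fin r → Finset K₁
  C2 : Fin r → Fin r → Finset K₂
  vCol : ∀ i, Ω i → K₁
  eCol : ∀ i j, Ω i → Ω j → K₂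
  eSymm : ∀ i j x y, eCol i j x y = eCol j i y x
  c2Symm : ∀ i j, C2 i j = C2 j i
  vMem : ∀ i x, vCol i x ∈ C1 i
  eMem : ∀ i j x y, eCol i j x y ∈ C2 i j

/-- `G` is `(b₁,b₂)`-colored: each color set `C_I` has at most `b_{|I|}` elements. -/
def CGraph.Bounded {r : ℕ} {Ω : Fin r → Type} {K₁ K₂ : Type}
    (G : CGraph Ω K₁ K₂) (b₁ b₂ : ℕ) : Prop :=
  (∀ i, (G.C1 i).card ≤ b₁) ∧ ∀ i j, i ≠ j → (G.C2 i j).card ≤ b₂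

/-- Relative density `d_G(c)` of a vertex (index-`{i}`) total color `c`:
the probability that a random vertex of `Ω i` has color `c`. -/
noncomputable def dV {r : ℕ} (Ω : Fin r → Type) [∀ i, Fintype (Ω i)]
    (w : ∀ i, Ω i → ℝ) {K₁ K₂ : Type} (G : CGraph Ω K₁ K₂) (i : Fin r) (c : K₁) : ℝ :=
  ∑ x : Ω i, if G.vCol i x = c then w i x else 0

/-- Relative density `d_G(c₂; ci, cj)` of an index-`{i,j}` total color:
the conditional probability that a random edge has color `c₂` given that its
endpoints have colors `ci`, `cj`. -/
noncomputable def dE {r : ℕ} (Ω : Fin r → Type) [∀ i, Fintype (Ω i)]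
    (w : ∀ i, Ω i → ℝ) {K₁ K₂ : Type} (G : CGraph Ω K₁ K₂) (i j : Fin r)
    (c₂ : K₂) (ci cj : K₁) : ℝ :=
  (∑ x : Ω i, ∑ y : Ω j,
      if G.eCol i j x y = c₂ ∧ G.vCol i x = ci ∧ G.vCol j y = cj then w i x * w j y else 0) /
  (∑ x : Ω i, ∑ y : Ω j, if G.vCol i x = ci ∧ G.vCol j y = cj then w i x * w j y else 0)

/-- A (simplicial) complex with `h` vertices in each of the `r` parts: a colored
partite graph where `none` is the (unique) invisible color of each index, and any
edge containing an invisible vertex is invisible. -/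
structure SComplex (r h : ℕ) (K₁ K₂ : Type) where
  vCol : Fin r → Fin h → Option K₁
  eCol : Fin r → Fin r → Fin h → Fin h → Option K₂
  eSymm : ∀ i j a b, eCol i j a b = eCol j i b a
  loopless : ∀ i a b, eCol i i a b = none
  down : ∀ i j a b, vCol i a = none → eCol i j a b = none

/-- `S ∈ S_{h,G}` : the visible colors of the complex `S` are (identified with)
colors of `G`. -/
def SComplex.MemS {r h : ℕ} {Ω : Fin r → Type} {K₁ K₂ : Type}
    (S : SComplex r h K₁ K₂) (G : CGraph Ω K₁ K₂) : Prop :=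
  (∀ i a c, S.vCol i a = some c → c ∈ G.C1 i) ∧
  (∀ i j a b c, S.eCol i j a b = some c → c ∈ G.C2 i j)

/-- `𝕍₁(S)`: the visible vertices of `S`. -/
noncomputable def V1 {r h : ℕ} {K₁ K₂ : Type} (S : SComplex r h K₁ K₂) :
    Finset (Fin r × Fin h) :=
  univ.filter fun p => S.vCol p.1 p.2 ≠ none

/-- `𝕍₂(S)`: the visible (size-2) edges of `S`, listed once each (`i < j`). -/
noncomputable def V2 {r h : ℕ} {K₁ K₂ : Type} (S : SComplex r h K₁ K₂) :
    Finset (Fin r × Fin r × Fin h × Fin h) :=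
  univ.filter fun q => q.1 < q.2.1 ∧ S.eCol q.1 q.2.1 q.2.2.1 q.2.2.2 ≠ none

/-- `d_G(S⟨v⟩)` for a vertex `v` of `S` (junk value `1` on invisible vertices). -/
noncomputable def dVS {r h : ℕ} (Ω : Fin r → Type) [∀ i, Fintype (Ω i)]
    (w : ∀ i, Ω i → ℝ) {K₁ K₂ : Type} (G : CGraph Ω K₁ K₂)
    (S : SComplex r h K₁ K₂) (p : Fin r × Fin h) : ℝ :=
  match S.vCol p.1 p.2 with
  | some c => dV Ω w G p.1 c
  | none => 1

/-- `d_G(S⟨e⟩)` for a size-2 edge `e` of `S` (junk value `1` on invisible edges). -/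
noncomputable def dES {r h : ℕ} (Ω : Fin r → Type) [∀ i, Fintype (Ω i)]
    (w : ∀ i, Ω i → ℝ) {K₁ K₂ : Type} (G : CGraph Ω K₁ K₂)
    (S : SComplex r h K₁ K₂) (q : Fin r × Fin r × Fin h × Fin h) : ℝ :=
  match S.eCol q.1 q.2.1 q.2.2.1 q.2.2.2, S.vCol q.1 q.2.2.1, S.vCol q.2.1 q.2.2.2 with
  | some c₂, some ci, some cj => dE Ω w G q.1 q.2.1 c₂ ci cj
  | _, _, _ => 1

/-- The event `G(φ(v)) = S(v)` for all visible vertices `v` of `S`. -/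
def vEvent {r h : ℕ} {Ω : Fin r → Type} {K₁ K₂ : Type} (G : CGraph Ω K₁ K₂)
    (S : SComplex r h K₁ K₂) (φ : PMap Ω h) : Prop :=
  ∀ p ∈ V1 S, some (G.vCol p.1 (φ p.1 p.2)) = S.vCol p.1 p.2

/-- The event `G(φ(e)) = S(e)` for all visible size-2 edges `e` of `S`. -/
def eEvent {r h : ℕ} {Ω : Fin r → Type} {K₁ K₂ : Type} (G : CGraph Ω K₁ K₂)
    (S : SComplex r h K₁ K₂) (φ : PMap Ω h) : Prop :=
  ∀ q ∈ V2 S, some (G.eCol q.1 q.2.1 (φ q.1 q.2.2.1) (φ q.2.1 q.2.2.2)) =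
    S.eCol q.1 q.2.1 q.2.2.1 q.2.2.2

/-- `P_{φ∈Φ(h)}[G(φ(e)) = S(e) for all e ∈ 𝕍(S)]`. -/
noncomputable def countProb {r h : ℕ} (Ω : Fin r → Type) [∀ i, Fintype (Ω i)]
    (w : ∀ i, Ω i → ℝ) {K₁ K₂ : Type} (G : CGraph Ω K₁ K₂)
    (S : SComplex r h K₁ K₂) : ℝ :=
  EPhi Ω w h fun φ => if vEvent G S φ ∧ eEvent G S φ then 1 else 0

/-- Value of an error function `δ` (defined on index-2 total colors) at `S⟨e⟩`. -/
noncomputable def deltaS {r h : ℕ} {K₁ K₂ : Type} (δ : Fin r → Fin r → K₂ → K₁ → K₁ → ℝ)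
    (S : SComplex r h K₁ K₂) (q : Fin r × Fin r × Fin h × Fin h) : ℝ :=
  match S.eCol q.1 q.2.1 q.2.2.1 q.2.2.2, S.vCol q.1 q.2.2.1, S.vCol q.2.1 q.2.2.2 with
  | some c₂, some ci, some cj => δ q.1 q.2.1 c₂ ci cj
  | _, _, _ => 0

/-- The counting equation (\ref{lj19}) for one complex `S`:
`P[G(φ(e)) = S(e) ∀ e ∈ 𝕍(S)] = ∏_{v∈𝕍₁(S)} d_G(S⟨v⟩) · ∏_{e∈𝕍₂(S)} (d_G(S⟨e⟩) ±̇ δ(S⟨e⟩))`,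
where `a ±̇ b` denotes a suitable number `c` with `max 0 (a-b) ≤ c ≤ min 1 (a+b)`. -/
def CountEqAt {r h : ℕ} (Ω : Fin r → Type) [∀ i, Fintype (Ω i)]
    (w : ∀ i, Ω i → ℝ) {K₁ K₂ : Type} (G : CGraph Ω K₁ K₂)
    (δ : Fin r → Fin r → K₂ → K₁ → K₁ → ℝ) (S : SComplex r h K₁ K₂) : Prop :=
  ∃ c : Fin r × Fin r × Fin h × Fin h → ℝ,
    (∀ q ∈ V2 S, max 0 (dES Ω w G S q - deltaS δ S q) ≤ c q ∧
        c q ≤ min 1 (dES Ω w G S q + deltaS δ S q)) ∧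
    countProb Ω w G S = (∏ p ∈ V1 S, dVS Ω w G S p) * ∏ q ∈ V2 S, c q

/-- `δ` is an `h`-error function of `G`: the counting equation holds for every
`S ∈ S_{h,G}`. -/
def IsErrorFun {r : ℕ} (Ω : Fin r → Type) [∀ i, Fintype (Ω i)]
    (w : ∀ i, Ω i → ℝ) {K₁ K₂ : Type} (G : CGraph Ω K₁ K₂) (h : ℕ)
    (δ : Fin r → Fin r → K₂ → K₁ → K₁ → ℝ) : Prop :=
  ∀ S : SComplex r h K₁ K₂, S.MemS G → CountEqAt Ω w G δ S

/-- `E_{e∈Ω_I}[δ(G⟨e⟩)]` for `I = {i,j}`. -/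
noncomputable def EdgeDeltaAvg {r : ℕ} (Ω : Fin r → Type) [∀ i, Fintype (Ω i)]
    (w : ∀ i, Ω i → ℝ) {K₁ K₂ : Type} (G : CGraph Ω K₁ K₂)
    (δ : Fin r → Fin r → K₂ → K₁ → K₁ → ℝ) (i j : Fin r) : ℝ :=
  ∑ x : Ω i, ∑ y : Ω j,
    w i x * w j y * δ i j (G.eCol i j x y) (G.vCol i x) (G.vCol j y)

/-- `G` is `(ε,h)`-regular. -/
def IsRegularG {r : ℕ} (Ω : Fin r → Type) [∀ i, Fintype (Ω i)]
    (w : ∀ i, Ω i → ℝ) {K₁ K₂ : Type} (G : CGraph Ω K₁ K₂) (h : ℕ) (ε : ℝ) : Prop :=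
  ∃ δ : Fin r → Fin r → K₂ → K₁ → K₁ → ℝ,
    (∀ i j c₂ ci cj, 0 ≤ δ i j c₂ ci cj) ∧
    IsErrorFun Ω w G h δ ∧
    ∀ i j : Fin r, i ≠ j → EdgeDeltaAvg Ω w G δ i j ≤ ε / (G.C2 i j).card

/-- `reg_h(G)`: the minimum `ε` such that `G` is `(ε,h)`-regular. -/
noncomputable def reg {r : ℕ} (Ω : Fin r → Type) [∀ i, Fintype (Ω i)]
    (w : ∀ i, Ω i → ℝ) {K₁ K₂ : Type} (G : CGraph Ω K₁ K₂) (h : ℕ) : ℝ :=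
  sInf {ε : ℝ | IsRegularG Ω w G h ε}

/-- The regularization `G/φ` of `G` by a partitionwise map `φ ∈ Φ(m)`: each vertex
`v ∈ Ω i` is recolored by its original color together with the colors of all edges
joining `v` to the sample points of `φ` in the other parts. Size-2 edges keep
their colors. -/
noncomputable def regz {r : ℕ} (Ω : Fin r → Type) [∀ i, Fintype (Ω i)]
    {K₁ K₂ : Type} [Fintype K₁] [Fintype K₂] (G : CGraph Ω K₁ K₂) {m : ℕ}
    (φ : PMap Ω m) : CGraph Ω (K₁ × (Fin r → Fin m → Option K₂)) K₂ where
  C1 i := univ.filter fun p : K₁ × (Fin r → Fin m → Option K₂) =>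
    p.1 ∈ G.C1 i ∧ ∀ j b, if j = i then p.2 j b = none
      else ∃ c ∈ G.C2 i j, p.2 j b = some c
  C2 := G.C2
  vCol i x := (G.vCol i x, fun j b => if j = i then none else some (G.eCol i j x (φ j b)))
  eCol := G.eCol
  eSymm := G.eSymm
  c2Symm := G.c2Symm
  vMem := by
    intro i x
    simp only [mem_filter, mem_univ, true_and]
    refine ⟨G.vMem i x, fun j b => ?_⟩
    by_cases hj : j = i
    · simp [hj]
    · simp only [hj, if_neg hj]
      exact ⟨G.eCol i j x (φ j b), G.eMem i j x (φ j b), rfl⟩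
  eMem := G.eMem

/-- Conditional expectation of `f` over a random pair `e = (x,y) ∈ Ω_{i} × Ω_{j}`
given the event `A`. -/
noncomputable def condEE {r : ℕ} (Ω : Fin r → Type) [∀ i, Fintype (Ω i)]
    (w : ∀ i, Ω i → ℝ) (i j : Fin r) (A : Ω i → Ω j → Prop) (f : Ω i → Ω j → ℝ) : ℝ :=
  (∑ x : Ω i, ∑ y : Ω j, if A x y then w i x * w j y * f x y else 0) /
  (∑ x : Ω i, ∑ y : Ω j, if A x y then w i x * w j y else 0)

/-- `e ≈_{∂(G/ψ)} e'` : the two pairs have the same frame color in the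
regularization `G/ψ`. -/
def frameRel {r : ℕ} (Ω : Fin r → Type) [∀ i, Fintype (Ω i)]
    {K₁ K₂ : Type} [Fintype K₁] [Fintype K₂] (G : CGraph Ω K₁ K₂) {m : ℕ}
    (ψ : PMap Ω m) (i j : Fin r) (x : Ω i) (y : Ω j) (x' : Ω i) (y' : Ω j) : Prop :=
  (regz Ω G ψ).vCol i x = (regz Ω G ψ).vCol i x' ∧
  (regz Ω G ψ).vCol j y = (regz Ω G ψ).vCol j y'

/-- `η(c₂; ci, cj)` (eq. (\ref{061220})) computed in `G`, with `N` random sample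
vertices in each part (`N = M·h` in the paper). -/
noncomputable def eta {r : ℕ} (Ω : Fin r → Type) [∀ i, Fintype (Ω i)]
    (w : ∀ i, Ω i → ℝ) {K₁ K₂ : Type} [Fintype K₁] [Fintype K₂]
    (G : CGraph Ω K₁ K₂) (N : ℕ) (i j : Fin r) (c₂ : K₂) (ci cj : K₁) : ℝ :=
  EPhi Ω w N fun ψ =>
    condEE Ω w i j (fun x' y' => G.vCol i x' = ci ∧ G.vCol j y' = cj) fun x' y' =>
      (condEE Ω w i j (fun x y => frameRel Ω G ψ i j x y x' y')
          (fun x y => if G.eCol i j x y = c₂ then 1 else 0) -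
        dE Ω w G i j c₂ ci cj) ^ 2

/-- `η(S⟨e⟩)` for a size-2 edge of a complex `S` (junk value `0` if invisible). -/
noncomputable def etaS {r h : ℕ} (Ω : Fin r → Type) [∀ i, Fintype (Ω i)]
    (w : ∀ i, Ω i → ℝ) {K₁ K₂ : Type} [Fintype K₁] [Fintype K₂]
    (G : CGraph Ω K₁ K₂) (N : ℕ) (S : SComplex r h K₁ K₂)
    (q : Fin r × Fin r × Fin h × Fin h) : ℝ :=
  match S.eCol q.1 q.2.1 q.2.2.1 q.2.2.2, S.vCol q.1 q.2.2.1, S.vCol q.2.1 q.2.2.2 with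
  | some c₂, some ci, some cj => eta Ω w G N q.1 q.2.1 c₂ ci cj
  | _, _, _ => 0

/-- `ε₁ := (ε/(6 b₂ binom(r,2)))²`. -/
noncomputable def eps1 (r b₂ : ℕ) (ε : ℝ) : ℝ := (ε / (6 * b₂ * r.choose 2)) ^ 2

/-- `C := √2 · binom(r,2) h² · (b₂/√ε₁)^{binom(r,2)h² − 1}`. -/
noncomputable def Cconst (r h b₂ : ℕ) (ε : ℝ) : ℝ :=
  Real.sqrt 2 * r.choose 2 * h ^ 2 *
    ((b₂ : ℝ) / Real.sqrt (eps1 r b₂ ε)) ^ (r.choose 2 * h ^ 2 - 1)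

/-- `M(m) := (b₁ b₂^{(r−1)m} / √ε₁)^{rh}` (as a sample count). -/
noncomputable def Mconst (r h b₁ b₂ : ℕ) (ε : ℝ) (m : ℕ) : ℕ :=
  ⌈(((b₁ : ℝ) * (b₂ : ℝ) ^ ((r - 1) * m)) / Real.sqrt (eps1 r b₂ ε)) ^ (r * h)⌉₊

/-- A vertex total color `c` of index `{i}` is bad. -/
def BadV {r : ℕ} (Ω : Fin r → Type) [∀ i, Fintype (Ω i)]
    (w : ∀ i, Ω i → ℝ) {K₁ K₂ : Type} (G : CGraph Ω K₁ K₂) (ε₁ : ℝ)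
    (i : Fin r) (c : K₁) : Prop :=
  dV Ω w G i c ≤ Real.sqrt ε₁ / (G.C1 i).card

/-- An index-`{i,j}` total color `(c₂; ci, cj)` is bad: some nonempty `I* ⊆ {i,j}`
has relative density at most `√ε₁/|C_{I*}|`. -/
def BadE {r : ℕ} (Ω : Fin r → Type) [∀ i, Fintype (Ω i)]
    (w : ∀ i, Ω i → ℝ) {K₁ K₂ : Type} (G : CGraph Ω K₁ K₂) (ε₁ : ℝ)
    (i j : Fin r) (c₂ : K₂) (ci cj : K₁) : Prop :=
  BadV Ω w G ε₁ i ci ∨ BadV Ω w G ε₁ j cj ∨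
    dE Ω w G i j c₂ ci cj ≤ Real.sqrt ε₁ / (G.C2 i j).card

/-- The error function `δ` of the paper: `1` on bad total colors, `C·√η` otherwise. -/
noncomputable def deltaDef {r : ℕ} (Ω : Fin r → Type) [∀ i, Fintype (Ω i)]
    (w : ∀ i, Ω i → ℝ) {K₁ K₂ : Type} [Fintype K₁] [Fintype K₂]
    (G : CGraph Ω K₁ K₂) (ε₁ Cc : ℝ) (N : ℕ)
    (i j : Fin r) (c₂ : K₂) (ci cj : K₁) : ℝ :=
  if BadE Ω w G ε₁ i j c₂ ci cj then 1 else Cc * Real.sqrt (eta Ω w G N i j c₂ ci cj)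

/-- `∏_{e∈D}(𝟙[G(φ(e)) = S(e)] − d_G(S⟨e⟩))`, single factor. -/
noncomputable def indMinusD {r h : ℕ} (Ω : Fin r → Type) [∀ i, Fintype (Ω i)]
    (w : ∀ i, Ω i → ℝ) {K₁ K₂ : Type} (G : CGraph Ω K₁ K₂)
    (S : SComplex r h K₁ K₂) (φ : PMap Ω h) (q : Fin r × Fin r × Fin h × Fin h) : ℝ :=
  (if some (G.eCol q.1 q.2.1 (φ q.1 q.2.2.1) (φ q.2.1 q.2.2.2)) =
      S.eCol q.1 q.2.1 q.2.2.1 q.2.2.2 then 1 else 0) - dES Ω w G S q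


/-!
Resample the two endpoints of `e₀`. The integrand becomes `F_{e₀}(e) · 𝟙[G(∂e) = S(∂e₀)]` times a
factor that is bounded by the indicator `I(φ)` of the other vertices of `S` and sees the endpoints
only through their colors in `G/φ`. Hence `F_{e₀} · 𝟙` may be replaced by its conditional
expectation given the frame color in `G/φ`, and Cauchy–Schwarz bounds the square of the left-hand
side by `E[I] · d(S⟨v_{i₀}⟩) d(S⟨v_{j₀}⟩) · E_φ[I(φ) Q(φ)]`, where `Q(φ)` is the mean square of that
conditional expectation.

To compare with `Q(ψ)` for `ψ ∈ Φ(mh)`, split `ψ` into `m` independent blocks `φ₁, …, φₘ ∈ Φ(h)`.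
Each block gives a coarser regularization than `ψ`, so `Q(φₖ) ≤ Q(ψ)`; using this at the first `k`
with `I(φₖ) = 1` yields `E[I Q] · ∑_{k<m} (1 - E[I])^k ≤ E[Q(ψ)]`, and
`(E[I] + 1/m) ∑_{k<m} (1 - E[I])^k ≥ 1`.
-/

lemma sq_sum_weight_mul_mul_le {ι : Type*} (s : Finset ι) {μ : ι → ℝ} (hμ : ∀ i, 0 ≤ μ i)
    (f g : ι → ℝ) :
    (∑ i ∈ s, μ i * f i * g i) ^ 2 ≤ (∑ i ∈ s, μ i * f i ^ 2) * ∑ i ∈ s, μ i * g i ^ 2 :=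
  sum_sq_le_sum_mul_sum_of_sq_le_mul s (fun i _ => mul_nonneg (hμ i) (sq_nonneg _))
    (fun i _ => mul_nonneg (hμ i) (sq_nonneg _)) fun i _ => le_of_eq (by ring)

section FiberAverage

variable {α β : Type*} [Fintype α] (μ : α → ℝ) (κ : α → β)

/-- The conditional expectation of `f` given `κ` under the weights `μ` (`0` on null fibers). -/
noncomputable def fiberAvg (f : α → ℝ) (a : α) : ℝ :=
  (∑ b, if κ b = κ a then μ b * f b else 0) / ∑ b, if κ b = κ a then μ b else 0

noncomputable def fiberAvgMeanSq (f : α → ℝ) : ℝ :=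
  ∑ a, μ a * fiberAvg μ κ f a ^ 2

variable {μ κ}

lemma fiberAvg_eq_zero {f : α → ℝ} {a : α} (hf : ∀ b, κ b = κ a → f b = 0) :
    fiberAvg μ κ f a = 0 := by
  rw [fiberAvg, sum_eq_zero fun b _ => ite_eq_right_iff.mpr fun hb => by simp [hf b hb],
    zero_div]

lemma fiberAvgMeanSq_nonneg (hμ : ∀ a, 0 ≤ μ a) (f : α → ℝ) : 0 ≤ fiberAvgMeanSq μ κ f :=
  sum_nonneg fun a _ => mul_nonneg (hμ a) (sq_nonneg _)

lemma weight_eq_zero_of_sum_fiber_eq_zero (hμ : ∀ a, 0 ≤ μ a) {a : α}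
    (ha : (∑ b, if κ b = κ a then μ b else 0) = 0) : μ a = 0 := by
  refine le_antisymm ?_ (hμ a)
  rw [← ha]
  convert single_le_sum (f := fun b => if κ b = κ a then μ b else 0)
    (fun b _ => by split_ifs <;> simp [hμ b]) (mem_univ a)
  simp

lemma sum_mul_fiberAvg_mul (hμ : ∀ a, 0 ≤ μ a) (f R : α → ℝ) (hR : ∀ a b, κ a = κ b → R a = R b) :
    ∑ a, μ a * fiberAvg μ κ f a * R a = ∑ a, μ a * f a * R a := by
  set D : α → ℝ := fun a => ∑ b, if κ b = κ a then μ b else 0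
  have hfiber : ∀ b, (∑ a, if κ b = κ a then μ a * (R a / D a) else 0) = R b / D b * D b := by
    intro b
    rw [mul_sum]
    refine sum_congr rfl fun a _ => ?_
    by_cases hab : κ a = κ b
    · rw [if_pos hab.symm, if_pos hab, hR a b hab, show D a = D b by simp only [D, hab]]
      ring
    · rw [if_neg (Ne.symm hab), if_neg hab, mul_zero]
  calc ∑ a, μ a * fiberAvg μ κ f a * R a
      = ∑ a, ∑ b, if κ b = κ a then μ b * f b * (μ a * (R a / D a)) else 0 := by
        refine sum_congr rfl fun a _ => ?_
        rw [fiberAvg, show ∀ N : ℝ, μ a * (N / D a) * R a = N * (μ a * (R a / D a)) by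
          intro N; ring, sum_mul]
        simp only [ite_mul, zero_mul]
    _ = ∑ b, μ b * f b * (R b / D b * D b) := by
        rw [sum_comm]
        refine sum_congr rfl fun b _ => ?_
        rw [← hfiber, mul_sum]
        simp only [mul_ite, mul_zero]
    _ = ∑ a, μ a * f a * R a := by
        refine sum_congr rfl fun b _ => ?_
        by_cases hD : D b = 0
        · simp [weight_eq_zero_of_sum_fiber_eq_zero hμ hD]
        · rw [div_mul_cancel₀ _ hD]

lemma fiberAvgMeanSq_mono (hμ : ∀ a, 0 ≤ μ a) {γ : Type*} {κ' : α → γ}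
    (hκ : ∀ a b, κ' a = κ' b → κ a = κ b) (f : α → ℝ) :
    fiberAvgMeanSq μ κ f ≤ fiberAvgMeanSq μ κ' f := by
  -- `E[f|κ]` is `κ'`-measurable, so `E[E[f|κ'] E[f|κ]] = E[E[f|κ]²]`; then Cauchy–Schwarz.
  set g := fiberAvg μ κ f
  have hg : ∀ a b, κ' a = κ' b → g a = g b := fun a b hab => by
    simp only [g, fiberAvg, hκ a b hab]
  have hcross : ∑ a, μ a * fiberAvg μ κ' f a * g a = fiberAvgMeanSq μ κ f := by
    rw [sum_mul_fiberAvg_mul hμ f g hg, ← sum_mul_fiberAvg_mul hμ (κ := κ) f g fun a b hab => by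
      simp only [g, fiberAvg, hab], fiberAvgMeanSq]
    exact sum_congr rfl fun a _ => by ring
  have hCS := sq_sum_weight_mul_mul_le univ hμ (fiberAvg μ κ' f) g
  rw [hcross] at hCS
  have hM := fiberAvgMeanSq_nonneg hμ (κ := κ) f
  have hM' := fiberAvgMeanSq_nonneg hμ (κ := κ') f
  change fiberAvgMeanSq μ κ f ^ 2 ≤ fiberAvgMeanSq μ κ' f * fiberAvgMeanSq μ κ f at hCS
  nlinarith

end FiberAverage

section PartitionwiseMaps

variable {r h : ℕ} {Ω : Fin r → Type}

def updV (φ : PMap Ω h) (i : Fin r) (a : Fin h) (x : Ω i) : PMap Ω h :=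
  Function.update φ i (Function.update (φ i) a x)

lemma updV_apply_self (φ : PMap Ω h) (i : Fin r) (a : Fin h) (x : Ω i) :
    updV φ i a x i a = x := by
  simp [updV]

lemma updV_apply_of_ne (φ : PMap Ω h) {i k : Fin r} {a c : Fin h} (x : Ω i)
    (hne : (k, c) ≠ (i, a)) : updV φ i a x k c = φ k c := by
  by_cases hk : k = i
  · subst hk
    simp [updV, Function.update_of_ne fun hc : c = a => hne (by rw [hc])]
  · simp [updV, Function.update_of_ne hk]

lemma updV_self (φ : PMap Ω h) (i : Fin r) (a : Fin h) : updV φ i a (φ i a) = φ := by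
  simp [updV]

def pairWeight (w : ∀ i, Ω i → ℝ) (i j : Fin r) (p : Ω i × Ω j) : ℝ := w i p.1 * w j p.2

lemma pairWeight_nonneg {w : ∀ i, Ω i → ℝ} (hw : ∀ i x, 0 ≤ w i x) (i j : Fin r)
    (p : Ω i × Ω j) : 0 ≤ pairWeight w i j p :=
  mul_nonneg (hw i p.1) (hw j p.2)

variable [∀ i, Fintype (Ω i)] {w : ∀ i, Ω i → ℝ}

lemma pmapWeight_nonneg (hw : ∀ i x, 0 ≤ w i x) (φ : PMap Ω h) : 0 ≤ pmapWeight Ω w φ :=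
  prod_nonneg fun i _ => prod_nonneg fun a _ => hw i (φ i a)

lemma EPhi_nonneg (hw : ∀ i x, 0 ≤ w i x) {f : PMap Ω h → ℝ} (hf : ∀ φ, 0 ≤ f φ) :
    0 ≤ EPhi Ω w h f :=
  sum_nonneg fun φ _ => mul_nonneg (pmapWeight_nonneg hw φ) (hf φ)

lemma EPhi_prod (htot : ∀ i, ∑ x : Ω i, w i x = 1) (P : Finset (Fin r × Fin h))
    (f : ∀ p : Fin r × Fin h, Ω p.1 → ℝ) :
    EPhi Ω w h (fun φ => ∏ p ∈ P, f p (φ p.1 p.2)) = ∏ p ∈ P, ∑ x, w p.1 x * f p x := by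
  set g : ∀ i : Fin r, Fin h → Ω i → ℝ := fun i a x =>
    w i x * if (i, a) ∈ P then f (i, a) x else 1
  have hφ : ∀ φ : PMap Ω h, pmapWeight Ω w φ * ∏ p ∈ P, f p (φ p.1 p.2)
      = ∏ i, ∏ a, g i a (φ i a) := fun φ => by
    simp only [g, pmapWeight, prod_mul_distrib, ← Fintype.prod_prod_type
      (f := fun p : Fin r × Fin h => if p ∈ P then f p (φ p.1 p.2) else 1), Fintype.prod_ite_mem]
  have hsum : ∀ i a, ∑ x, g i a x = if (i, a) ∈ P then ∑ x, w i x * f (i, a) x else 1 :=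
    fun i a => by split_ifs with hp <;> simp [g, hp, htot]
  rw [EPhi, sum_congr rfl fun φ _ => hφ φ,
    ← Fintype.prod_sum fun i (ψ : Fin h → Ω i) => ∏ a, g i a (ψ a)]
  simp only [← Fintype.prod_sum fun a x => g _ a x, hsum]
  rw [← Fintype.prod_prod_type (f := fun p : Fin r × Fin h =>
    if p ∈ P then ∑ x, w p.1 x * f p x else 1), Fintype.prod_ite_mem]

lemma sum_pmapWeight (htot : ∀ i, ∑ x : Ω i, w i x = 1) :
    ∑ φ : PMap Ω h, pmapWeight Ω w φ = 1 := by
  simpa [EPhi] using EPhi_prod (w := w) (h := h) htot ∅ fun _ _ => 1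

lemma pmapWeight_updV (φ : PMap Ω h) (i : Fin r) (a : Fin h) (x : Ω i) :
    pmapWeight Ω w (updV φ i a x) = w i x *
      ((∏ a' ∈ univ.erase a, w i (φ i a')) * ∏ i' ∈ univ.erase i, ∏ a', w i' (φ i' a')) := by
  rw [pmapWeight, ← mul_prod_erase _ _ (mem_univ i),
    ← mul_prod_erase _ _ (mem_univ a), updV_apply_self, mul_assoc]
  congr 2
  · exact prod_congr rfl fun a' ha' => by
      rw [updV_apply_of_ne _ _ fun he => ne_of_mem_erase ha' (Prod.ext_iff.mp he).2]
  · exact prod_congr rfl fun i' hi' => prod_congr rfl fun a' _ => by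
      rw [updV_apply_of_ne _ _ fun he => ne_of_mem_erase hi' (Prod.ext_iff.mp he).1]

lemma EPhi_resample (htot : ∀ i, ∑ x : Ω i, w i x = 1) (i : Fin r) (a : Fin h)
    (f : PMap Ω h → ℝ) :
    EPhi Ω w h f = EPhi Ω w h fun φ => ∑ x, w i x * f (updV φ i a x) := by
  have hσ : Function.Involutive fun p : PMap Ω h × Ω i => (updV p.1 i a p.2, p.1 i a) :=
    fun ⟨φ, x⟩ => by simp [updV]
  have hweight : ∀ (φ : PMap Ω h) (x : Ω i),
      pmapWeight Ω w (updV φ i a x) * w i (φ i a) = pmapWeight Ω w φ * w i x := by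
    intro φ x
    conv_rhs => rw [← updV_self φ i a]
    rw [pmapWeight_updV, pmapWeight_updV]
    ring
  calc EPhi Ω w h f
      = ∑ p : PMap Ω h × Ω i, pmapWeight Ω w p.1 * w i p.2 * f p.1 := by
        simp only [EPhi, Fintype.sum_prod_type, mul_right_comm _ _ (f _), ← mul_sum, htot,
          mul_one]
    _ = ∑ p : PMap Ω h × Ω i, pmapWeight Ω w p.1 * w i p.2 * f (updV p.1 i a p.2) := by
        rw [← Equiv.sum_comp (hσ.toPerm _)]
        exact sum_congr rfl fun ⟨φ, x⟩ _ => by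
          simp only [Function.Involutive.coe_toPerm, hweight]
    _ = EPhi Ω w h fun φ => ∑ x, w i x * f (updV φ i a x) := by
        simp only [EPhi, Fintype.sum_prod_type, mul_sum, mul_assoc]

end PartitionwiseMaps

section Blocks

variable {r : ℕ} {Ω : Fin r → Type} (m h : ℕ)

def blockMap (ψ : PMap Ω (m * h)) (k : Fin m) : PMap Ω h :=
  fun i b => ψ i (finProdFinEquiv (k, b))

def blockEquiv : PMap Ω (m * h) ≃ (Fin m → PMap Ω h) where
  toFun := blockMap m h
  invFun ρ i c := ρ (finProdFinEquiv.symm c).1 i (finProdFinEquiv.symm c).2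
  left_inv ψ := by funext i c; simp only [blockMap, Prod.mk.eta, Equiv.apply_symm_apply]
  right_inv ρ := by funext k i b; simp [blockMap]

lemma EPhi_eq_sum_blocks [∀ i, Fintype (Ω i)] (w : ∀ i, Ω i → ℝ) (f : PMap Ω (m * h) → ℝ) :
    EPhi Ω w (m * h) f =
      ∑ ρ : Fin m → PMap Ω h, (∏ k, pmapWeight Ω w (ρ k)) * f ((blockEquiv m h).symm ρ) := by
  rw [EPhi, ← Equiv.sum_comp (blockEquiv m h).symm]
  refine sum_congr rfl fun ρ _ => ?_
  congr 1
  calc pmapWeight Ω w ((blockEquiv m h).symm ρ) = ∏ i, ∏ k, ∏ b, w i (ρ k i b) :=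
        prod_congr rfl fun i _ => by
          rw [← Equiv.prod_comp finProdFinEquiv, Fintype.prod_prod_type]
          simp only [blockEquiv, Equiv.coe_fn_symm_mk, Equiv.symm_apply_apply]
    _ = ∏ k, pmapWeight Ω w (ρ k) := prod_comm

end Blocks

section FirstSuccess

lemma prod_ite_eq_ite_lt {M : Type*} [CommMonoid M] {m : ℕ} (k : Fin m) (f g : Fin m → M) :
    ∏ l, (if l = k then f l else if l < k then g l else 1) = f k * ∏ l with l < k, g l := by
  rw [← mul_prod_erase _ _ (mem_univ k), if_pos rfl, prod_filter,
    ← mul_prod_erase _ (fun l => if l < k then g l else (1 : M)) (mem_univ k),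
    if_neg (lt_irrefl k), one_mul]
  exact congrArg _ (prod_congr rfl fun l hl => if_neg (ne_of_mem_erase hl))

variable {X : Type*} [Fintype X] {W : X → ℝ}

lemma sum_prod_weight_mul_prod_lt (hW : ∑ x, W x = 1) {m : ℕ} (g u : X → ℝ) (k : Fin m) :
    ∑ ρ : Fin m → X, (∏ l, W (ρ l)) * (g (ρ k) * ∏ l with l < k, u (ρ l)) =
      (∑ x, W x * g x) * (∑ x, W x * u x) ^ (k : ℕ) := by
  set v : Fin m → X → ℝ := fun l x => W x * if l = k then g x else if l < k then u x else 1
  have hρ : ∀ ρ : Fin m → X,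
      (∏ l, W (ρ l)) * (g (ρ k) * ∏ l with l < k, u (ρ l)) = ∏ l, v l (ρ l) := fun ρ => by
    simp only [v, prod_mul_distrib, prod_ite_eq_ite_lt k (fun l => g (ρ l))]
  have hv : ∀ l, ∑ x, v l x =
      if l = k then ∑ x, W x * g x else if l < k then ∑ x, W x * u x else 1 := fun l => by
    split_ifs <;> simp [v, *]
  rw [sum_congr rfl fun ρ _ => hρ ρ, ← Fintype.prod_sum, prod_congr rfl
    fun l _ => hv l, prod_ite_eq_ite_lt, prod_const, filter_gt_eq_Iio, Fin.card_Iio]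

lemma sum_mul_mul_prod_one_sub_le {m : ℕ} {t q : Fin m → ℝ} {c : ℝ} (ht0 : ∀ k, 0 ≤ t k)
    (ht1 : ∀ k, t k ≤ 1) (hq : ∀ k, q k ≤ c) (hc : 0 ≤ c) :
    ∑ k, t k * q k * ∏ l with l < k, (1 - t l) ≤ c := by
  have hprod : ∀ k, 0 ≤ ∏ l with l < k, (1 - t l) := fun k =>
    prod_nonneg fun l _ => sub_nonneg.mpr (ht1 l)
  have hsum : ∑ k, t k * ∏ l with l < k, (1 - t l) ≤ 1 := by
    have := prod_one_sub_ordered univ t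
    have : 0 ≤ ∏ l, (1 - t l) := prod_nonneg fun l _ => sub_nonneg.mpr (ht1 l)
    linarith
  calc ∑ k, t k * q k * ∏ l with l < k, (1 - t l)
      ≤ ∑ k, t k * (∏ l with l < k, (1 - t l)) * c := sum_le_sum fun k _ => by
        rw [mul_right_comm]
        exact mul_le_mul_of_nonneg_left (hq k) (mul_nonneg (ht0 k) (hprod k))
    _ ≤ c := by
        rw [← sum_mul]
        exact mul_le_of_le_one_left hc hsum

lemma one_le_add_one_div_mul_geom_sum {D : ℝ} (hD0 : 0 ≤ D) (hD1 : D ≤ 1) {m : ℕ} (hm : 1 ≤ m) :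
    1 ≤ (D + 1 / m) * ∑ n ∈ range m, (1 - D) ^ n := by
  have hgeom : D * ∑ n ∈ range m, (1 - D) ^ n = 1 - (1 - D) ^ m := by
    have := geom_sum_mul (1 - D) m
    linear_combination -this
  have htail : (m : ℝ) * (1 - D) ^ m ≤ ∑ n ∈ range m, (1 - D) ^ n := by
    simpa using card_nsmul_le_sum (range m) (fun n => (1 - D) ^ n) ((1 - D) ^ m)
      fun n hn => pow_le_pow_of_le_one (by linarith) (by linarith)
        (mem_range.mp hn).le
  have hm' : (0 : ℝ) < m := by exact_mod_cast hm
  have hpow : (1 - D) ^ m ≤ (∑ n ∈ range m, (1 - D) ^ n) / m :=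
    (le_div_iff₀ hm').mpr (by linarith)
  rw [add_mul, hgeom, one_div_mul_eq_div]
  linarith

/-- Stop at the first of the `m` independent samples `ρ k` at which the `[0,1]`-valued `I`
"succeeds". -/
theorem sum_weight_mul_mul_le_of_le_blocks (hW0 : ∀ x, 0 ≤ W x) (hW : ∑ x, W x = 1)
    {I Q : X → ℝ} (hI0 : ∀ x, 0 ≤ I x) (hI1 : ∀ x, I x ≤ 1) (hQ : ∀ x, 0 ≤ Q x)
    {m : ℕ} (hm : 1 ≤ m) (Qhat : (Fin m → X) → ℝ) (hQhat : ∀ ρ k, Q (ρ k) ≤ Qhat ρ) :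
    ∑ x, W x * (I x * Q x) ≤
      (∑ x, W x * I x + 1 / m) * ∑ ρ : Fin m → X, (∏ k, W (ρ k)) * Qhat ρ := by
  set D := ∑ x, W x * I x
  set T := ∑ x, W x * (I x * Q x)
  have hfirst : ∀ ρ : Fin m → X,
      ∑ k, I (ρ k) * Q (ρ k) * ∏ l with l < k, (1 - I (ρ l)) ≤ Qhat ρ := fun ρ =>
    sum_mul_mul_prod_one_sub_le (fun k => hI0 _) (fun k => hI1 _) (hQhat ρ)
      ((hQ _).trans (hQhat ρ ⟨0, hm⟩))
  have hlower : (∑ n ∈ range m, (1 - D) ^ n) * T ≤ ∑ ρ : Fin m → X, (∏ k, W (ρ k)) * Qhat ρ := by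
    have hfail : ∑ x, W x * (1 - I x) = 1 - D := by
      simp only [D, mul_one_sub, sum_sub_distrib, hW]
    calc (∑ n ∈ range m, (1 - D) ^ n) * T
        = ∑ k : Fin m, ∑ ρ : Fin m → X, (∏ l, W (ρ l)) *
            (I (ρ k) * Q (ρ k) * ∏ l with l < k, (1 - I (ρ l))) := by
          rw [← Fin.sum_univ_eq_sum_range, sum_mul]
          refine sum_congr rfl fun k _ => ?_
          rw [sum_prod_weight_mul_prod_lt hW (fun x => I x * Q x) (fun x => 1 - I x), hfail]
          ring
      _ ≤ ∑ ρ : Fin m → X, (∏ k, W (ρ k)) * Qhat ρ := by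
          rw [sum_comm]
          refine sum_le_sum fun ρ _ => ?_
          rw [← mul_sum]
          exact mul_le_mul_of_nonneg_left (hfirst ρ)
            (prod_nonneg fun k _ => hW0 _)
  have hD0 : 0 ≤ D := sum_nonneg fun x _ => mul_nonneg (hW0 x) (hI0 x)
  have hD1 : D ≤ 1 := hW ▸ sum_le_sum fun x _ => mul_le_of_le_one_right (hW0 x) (hI1 x)
  have hT : 0 ≤ T := sum_nonneg fun x _ => mul_nonneg (hW0 x) (mul_nonneg (hI0 x) (hQ x))
  calc T ≤ ((D + 1 / m) * ∑ n ∈ range m, (1 - D) ^ n) * T :=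
        le_mul_of_one_le_left hT (one_le_add_one_div_mul_geom_sum hD0 hD1 hm)
    _ ≤ _ := by
        rw [mul_assoc]
        exact mul_le_mul_of_nonneg_left hlower (by positivity)

end FirstSuccess

section Regularization

variable {r : ℕ} {Ω : Fin r → Type} [∀ i, Fintype (Ω i)] {K₁ K₂ : Type} [Fintype K₁]
  [Fintype K₂] (G : CGraph Ω K₁ K₂)

lemma regz_vCol_comp_eq {n n' : ℕ} {ψ : PMap Ω n} (e : Fin n' → Fin n) {i : Fin r}
    {x x' : Ω i} (hx : (regz Ω G ψ).vCol i x = (regz Ω G ψ).vCol i x') :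
    (regz Ω G fun j => ψ j ∘ e).vCol i x = (regz Ω G fun j => ψ j ∘ e).vCol i x' :=
  congrArg (Prod.map id fun (c : Fin r → Fin n → Option K₂) j b => c j (e b)) hx

lemma eCol_eq_of_regz_vCol_eq {n : ℕ} {φ : PMap Ω n} {i j : Fin r} (hij : i ≠ j) {x x' : Ω i}
    (hx : (regz Ω G φ).vCol i x = (regz Ω G φ).vCol i x') (b : Fin n) :
    G.eCol i j x (φ j b) = G.eCol i j x' (φ j b) := by
  simpa [regz, hij.symm] using congrFun (congrFun (congrArg Prod.snd hx) j) b

lemma eCol_congr_of_regz {n : ℕ} {φ ψ ψ' : PMap Ω n} {k l : Fin r} (hkl : k ≠ l) {c d : Fin n}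
    (hc : (regz Ω G φ).vCol k (ψ k c) = (regz Ω G φ).vCol k (ψ' k c))
    (hd : (regz Ω G φ).vCol l (ψ l d) = (regz Ω G φ).vCol l (ψ' l d))
    (hfix : (ψ k c = φ k c ∧ ψ' k c = φ k c) ∨ (ψ l d = φ l d ∧ ψ' l d = φ l d)) :
    G.eCol k l (ψ k c) (ψ l d) = G.eCol k l (ψ' k c) (ψ' l d) := by
  rcases hfix with ⟨h₁, h₂⟩ | ⟨h₁, h₂⟩
  · rw [h₁, h₂, G.eSymm, G.eSymm k l]
    exact eCol_eq_of_regz_vCol_eq G hkl.symm hd c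
  · rw [h₁, h₂]
    exact eCol_eq_of_regz_vCol_eq G hkl hc d

noncomputable def pairKey {n : ℕ} (φ : PMap Ω n) (i j : Fin r) (p : Ω i × Ω j) :
    (K₁ × (Fin r → Fin n → Option K₂)) × (K₁ × (Fin r → Fin n → Option K₂)) :=
  ((regz Ω G φ).vCol i p.1, (regz Ω G φ).vCol j p.2)

/-- `E_{e*∈Ω_{ij}}[(E_{e∈Ω_{ij}}[f(e) | e ≈_{∂(G/φ)} e*])²]`. -/
noncomputable def frameMeanSq (w : ∀ i, Ω i → ℝ) {n : ℕ} (φ : PMap Ω n) (i j : Fin r)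
    (f : Ω i × Ω j → ℝ) : ℝ :=
  fiberAvgMeanSq (pairWeight w i j) (pairKey G φ i j) f

lemma sum_condEE_sq_eq_frameMeanSq (w : ∀ i, Ω i → ℝ) {n : ℕ} (φ : PMap Ω n) (i j : Fin r)
    (f : Ω i → Ω j → ℝ) :
    ∑ x' : Ω i, ∑ y' : Ω j, w i x' * w j y' *
        condEE Ω w i j (fun x y => frameRel Ω G φ i j x y x' y') f ^ 2 =
      frameMeanSq G w φ i j fun p => f p.1 p.2 := by
  simp only [frameMeanSq, fiberAvgMeanSq, fiberAvg, condEE, frameRel, pairKey, pairWeight,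
    Prod.mk.injEq, Fintype.sum_prod_type]
  -- the two sides differ only in their `Decidable` instances
  congr! <;> exact funext₂ fun _ _ => ite_congr rfl (fun _ => rfl) fun _ => rfl

lemma frameMeanSq_blockMap_le {w : ∀ i, Ω i → ℝ} (hw : ∀ i x, 0 ≤ w i x) {m h : ℕ}
    (ψ : PMap Ω (m * h)) (k : Fin m) (i j : Fin r) (f : Ω i × Ω j → ℝ) :
    frameMeanSq G w (blockMap m h ψ k) i j f ≤ frameMeanSq G w ψ i j f :=
  fiberAvgMeanSq_mono (pairWeight_nonneg hw i j) (fun p p' hpp' => by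
    simp only [pairKey, Prod.mk.injEq] at hpp' ⊢
    exact ⟨regz_vCol_comp_eq G (fun b => finProdFinEquiv (k, b)) hpp'.1,
      regz_vCol_comp_eq G (fun b => finProdFinEquiv (k, b)) hpp'.2⟩) f

/-- The `m` blocks of `h` sample points of `ψ ∈ Φ(m h)` are independent copies of `φ ∈ Φ(h)`,
and each of them gives a coarser regularization than `ψ`. -/
lemma EPhi_mul_frameMeanSq_le {w : ∀ i, Ω i → ℝ} (hw : ∀ i x, 0 ≤ w i x)
    (htot : ∀ i, ∑ x : Ω i, w i x = 1) {h m : ℕ} (hm : 1 ≤ m) {I : PMap Ω h → ℝ}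
    (hI0 : ∀ φ, 0 ≤ I φ) (hI1 : ∀ φ, I φ ≤ 1) (i j : Fin r) (f : Ω i × Ω j → ℝ) :
    EPhi Ω w h (fun φ => I φ * frameMeanSq G w φ i j f) ≤
      (EPhi Ω w h I + 1 / m) * EPhi Ω w (m * h) fun ψ => frameMeanSq G w ψ i j f := by
  rw [EPhi_eq_sum_blocks]
  refine sum_weight_mul_mul_le_of_le_blocks (pmapWeight_nonneg hw) (sum_pmapWeight htot) hI0 hI1
    (fun φ => fiberAvgMeanSq_nonneg (pairWeight_nonneg hw i j) f) hm _ fun ρ k => ?_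
  have hblock : blockMap m h ((blockEquiv m h).symm ρ) k = ρ k :=
    congrFun ((blockEquiv m h).apply_symm_apply ρ) k
  exact hblock ▸ frameMeanSq_blockMap_le G hw _ k i j f

end Regularization

section Complexes

variable {r h : ℕ} {K₁ K₂ : Type} {S : SComplex r h K₁ K₂}

lemma lt_of_mem_V2 {q : Fin r × Fin r × Fin h × Fin h} (hq : q ∈ V2 S) : q.1 < q.2.1 :=
  (mem_filter.mp hq).2.1

lemma mem_V1_of_mem_V2 {i j : Fin r} {a b : Fin h} (he : (i, j, a, b) ∈ V2 S) :
    (i, a) ∈ V1 S ∧ (j, b) ∈ (V1 S).erase (i, a) := by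
  have hvis := (mem_filter.mp he).2.2
  refine ⟨mem_filter.mpr ⟨mem_univ _, fun hi => hvis (S.down i j a b hi)⟩,
    mem_erase.mpr ⟨fun hji => (lt_of_mem_V2 he).ne (Prod.ext_iff.mp hji).1.symm,
      mem_filter.mpr ⟨mem_univ _, fun hj => hvis ?_⟩⟩⟩
  rw [S.eSymm]
  exact S.down j i b a hj

end Complexes

section Correlation

variable {r h : ℕ} {Ω : Fin r → Type} {K₁ K₂ : Type} (G : CGraph Ω K₁ K₂)
  (S : SComplex r h K₁ K₂)

noncomputable def vertexInd (φ : PMap Ω h) (v : Fin r × Fin h) : ℝ :=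
  if some (G.vCol v.1 (φ v.1 v.2)) = S.vCol v.1 v.2 then 1 else 0

noncomputable def edgeProd (F : Fin r × Fin r × Fin h × Fin h → K₂ → ℝ)
    (s : Finset (Fin r × Fin r × Fin h × Fin h)) (φ : PMap Ω h) : ℝ :=
  ∏ q ∈ s, F q (G.eCol q.1 q.2.1 (φ q.1 q.2.2.1) (φ q.2.1 q.2.2.2))

/-- `𝟙[G(∂e) = S(∂e₀)]` for `e = p` and `e₀ = {(i₀,a₀),(j₀,b₀)}`. -/
noncomputable def frameInd {i₀ j₀ : Fin r} (a₀ b₀ : Fin h) (p : Ω i₀ × Ω j₀) : ℝ :=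
  if some (G.vCol i₀ p.1) = S.vCol i₀ a₀ ∧ some (G.vCol j₀ p.2) = S.vCol j₀ b₀ then 1 else 0

def updPair (φ : PMap Ω h) {i₀ j₀ : Fin r} (a₀ b₀ : Fin h) (p : Ω i₀ × Ω j₀) : PMap Ω h :=
  updV (updV φ j₀ b₀ p.2) i₀ a₀ p.1

noncomputable def countIntegrand (F : Fin r × Fin r × Fin h × Fin h → K₂ → ℝ) (φ : PMap Ω h) : ℝ :=
  edgeProd G F (V2 S) φ * ∏ v ∈ V1 S, vertexInd G S φ v

noncomputable def otherVertexInd (i₀ : Fin r) (a₀ : Fin h) (j₀ : Fin r) (b₀ : Fin h)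
    (φ : PMap Ω h) : ℝ :=
  ∏ v ∈ ((V1 S).erase (i₀, a₀)).erase (j₀, b₀), vertexInd G S φ v

/-- `F_{e₀}(e) · 𝟙[G(∂e) = S(∂e₀)]` for `e₀ = (i₀, j₀, a₀, b₀)`. -/
noncomputable def anchorFun (F : Fin r × Fin r × Fin h × Fin h → K₂ → ℝ) {i₀ j₀ : Fin r}
    (a₀ b₀ : Fin h) (p : Ω i₀ × Ω j₀) : ℝ :=
  F (i₀, j₀, a₀, b₀) (G.eCol i₀ j₀ p.1 p.2) * frameInd G S a₀ b₀ p

variable {G S}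

lemma prod_vertexInd_nonneg (s : Finset (Fin r × Fin h)) (φ : PMap Ω h) :
    0 ≤ ∏ v ∈ s, vertexInd G S φ v :=
  prod_nonneg fun v _ => by unfold vertexInd; split_ifs <;> norm_num

lemma prod_vertexInd_le_one (s : Finset (Fin r × Fin h)) (φ : PMap Ω h) :
    ∏ v ∈ s, vertexInd G S φ v ≤ 1 :=
  prod_le_one (fun v _ => by unfold vertexInd; split_ifs <;> norm_num)
    fun v _ => by unfold vertexInd; split_ifs <;> norm_num

lemma abs_edgeProd_le_one {F : Fin r × Fin r × Fin h × Fin h → K₂ → ℝ}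
    {s : Finset (Fin r × Fin r × Fin h × Fin h)}
    (hF : ∀ q ∈ s, ∀ c ∈ G.C2 q.1 q.2.1, |F q c| ≤ 1) (φ : PMap Ω h) :
    |edgeProd G F s φ| ≤ 1 := by
  rw [edgeProd, abs_prod]
  exact prod_le_one (fun q _ => abs_nonneg _) fun q hq => hF q hq _ (G.eMem _ _ _ _)

variable {i₀ j₀ : Fin r} {a₀ b₀ : Fin h}

lemma updPair_apply_fst (φ : PMap Ω h) (p : Ω i₀ × Ω j₀) : updPair φ a₀ b₀ p i₀ a₀ = p.1 :=
  updV_apply_self _ _ _ _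

lemma updPair_apply_snd (hij : i₀ ≠ j₀) (φ : PMap Ω h) (p : Ω i₀ × Ω j₀) :
    updPair φ a₀ b₀ p j₀ b₀ = p.2 := by
  rw [updPair, updV_apply_of_ne _ _ fun he => hij (Prod.ext_iff.mp he).1.symm, updV_apply_self]

lemma updPair_apply_of_ne (φ : PMap Ω h) (p : Ω i₀ × Ω j₀) {k : Fin r} {c : Fin h}
    (hA : (k, c) ≠ (i₀, a₀)) (hB : (k, c) ≠ (j₀, b₀)) : updPair φ a₀ b₀ p k c = φ k c := by
  rw [updPair, updV_apply_of_ne _ _ hA, updV_apply_of_ne _ _ hB]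

lemma frameInd_eq_zero_or_one (p : Ω i₀ × Ω j₀) :
    frameInd G S a₀ b₀ p = 0 ∨ frameInd G S a₀ b₀ p = 1 := by
  unfold frameInd; split_ifs <;> simp

lemma countIntegrand_updPair (he₀ : (i₀, j₀, a₀, b₀) ∈ V2 S)
    (F : Fin r × Fin r × Fin h × Fin h → K₂ → ℝ) (φ : PMap Ω h) (p : Ω i₀ × Ω j₀) :
    countIntegrand G S F (updPair φ a₀ b₀ p) = anchorFun G S F a₀ b₀ p *
      (edgeProd G F ((V2 S).erase (i₀, j₀, a₀, b₀)) (updPair φ a₀ b₀ p) *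
        otherVertexInd G S i₀ a₀ j₀ b₀ φ) := by
  have hij := (lt_of_mem_V2 he₀).ne
  obtain ⟨hA, hB⟩ := mem_V1_of_mem_V2 he₀
  have hrest : ∏ v ∈ ((V1 S).erase (i₀, a₀)).erase (j₀, b₀), vertexInd G S (updPair φ a₀ b₀ p) v
      = otherVertexInd G S i₀ a₀ j₀ b₀ φ := prod_congr rfl fun v hv => by
    obtain ⟨hvB, hv'⟩ := mem_erase.mp hv
    simp only [vertexInd, updPair_apply_of_ne φ p (ne_of_mem_erase hv') hvB]
  have hframe : vertexInd G S (updPair φ a₀ b₀ p) (i₀, a₀) *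
      vertexInd G S (updPair φ a₀ b₀ p) (j₀, b₀) = frameInd G S a₀ b₀ p := by
    simp only [vertexInd, frameInd, updPair_apply_fst, updPair_apply_snd hij,
      ite_zero_mul_ite_zero, mul_one]
  rw [countIntegrand, edgeProd, edgeProd, ← mul_prod_erase _ _ he₀,
    ← mul_prod_erase _ _ hA, ← mul_prod_erase _ _ hB, hrest, anchorFun, ← hframe]
  simp only [updPair_apply_fst, updPair_apply_snd hij]
  ring

lemma frameInd_nonneg (p : Ω i₀ × Ω j₀) : 0 ≤ frameInd G S a₀ b₀ p := by
  unfold frameInd; split_ifs <;> norm_num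

lemma frameInd_le_one (p : Ω i₀ × Ω j₀) : frameInd G S a₀ b₀ p ≤ 1 := by
  unfold frameInd; split_ifs <;> norm_num

variable [∀ i, Fintype (Ω i)]

lemma sum_weight_mul_ite_eq_dVS (w : ∀ i, Ω i → ℝ) {v : Fin r × Fin h}
    (hv : S.vCol v.1 v.2 ≠ none) :
    ∑ x, w v.1 x * (if some (G.vCol v.1 x) = S.vCol v.1 v.2 then 1 else 0) = dVS Ω w G S v := by
  obtain ⟨c, hc⟩ := Option.ne_none_iff_exists'.mp hv
  simp [dVS, dV, hc]

lemma EPhi_prod_vertexInd {w : ∀ i, Ω i → ℝ} (htot : ∀ i, ∑ x : Ω i, w i x = 1)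
    {s : Finset (Fin r × Fin h)} (hs : s ⊆ V1 S) :
    EPhi Ω w h (fun φ => ∏ v ∈ s, vertexInd G S φ v) = ∏ v ∈ s, dVS Ω w G S v := by
  refine (EPhi_prod htot s fun v x => if some (G.vCol v.1 x) = S.vCol v.1 v.2 then 1 else 0).trans
    (prod_congr rfl fun v hv => sum_weight_mul_ite_eq_dVS w (mem_filter.mp (hs hv)).2)

lemma sum_pairWeight_mul_frameInd (w : ∀ i, Ω i → ℝ) (hA : (i₀, a₀) ∈ V1 S) (hB : (j₀, b₀) ∈ V1 S) :
    ∑ p, pairWeight w i₀ j₀ p * frameInd G S a₀ b₀ p =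
      dVS Ω w G S (i₀, a₀) * dVS Ω w G S (j₀, b₀) := by
  rw [← sum_weight_mul_ite_eq_dVS w (mem_filter.mp hA).2,
    ← sum_weight_mul_ite_eq_dVS w (mem_filter.mp hB).2, sum_mul_sum,
    Fintype.sum_prod_type]
  refine sum_congr rfl fun x _ => sum_congr rfl fun y _ => ?_
  simp only [pairWeight, frameInd, ite_and]
  split_ifs <;> ring

variable [Fintype K₁] [Fintype K₂]

lemma frameInd_eq_of_pairKey_eq {n : ℕ} {φ : PMap Ω n}
    {p p' : Ω i₀ × Ω j₀} (hpp' : pairKey G φ i₀ j₀ p = pairKey G φ i₀ j₀ p') :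
    frameInd G S a₀ b₀ p = frameInd G S a₀ b₀ p' := by
  have h₁ : G.vCol i₀ p.1 = G.vCol i₀ p'.1 := congrArg (·.1.1) hpp'
  have h₂ : G.vCol j₀ p.2 = G.vCol j₀ p'.2 := congrArg (·.2.1) hpp'
  simp only [frameInd, h₁, h₂]

lemma regz_vCol_updPair_congr (hij : i₀ ≠ j₀) {φ : PMap Ω h} {p p' : Ω i₀ × Ω j₀}
    (hpp' : pairKey G φ i₀ j₀ p = pairKey G φ i₀ j₀ p') (k : Fin r) (c : Fin h) :
    (regz Ω G φ).vCol k (updPair φ a₀ b₀ p k c) = (regz Ω G φ).vCol k (updPair φ a₀ b₀ p' k c) := by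
  by_cases hA : (k, c) = (i₀, a₀)
  · obtain ⟨rfl, rfl⟩ := Prod.ext_iff.mp hA
    rw [updPair_apply_fst, updPair_apply_fst]
    exact congrArg Prod.fst hpp'
  by_cases hB : (k, c) = (j₀, b₀)
  · obtain ⟨rfl, rfl⟩ := Prod.ext_iff.mp hB
    rw [updPair_apply_snd hij, updPair_apply_snd hij]
    exact congrArg Prod.snd hpp'
  rw [updPair_apply_of_ne φ p hA hB, updPair_apply_of_ne φ p' hA hB]

/-- Besides `e₀` itself, every edge meets the resampled pair in at most one vertex. -/
lemma edgeProd_updPair_congr (hij : i₀ < j₀) (F : Fin r × Fin r × Fin h × Fin h → K₂ → ℝ)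
    {φ : PMap Ω h} {p p' : Ω i₀ × Ω j₀} (hpp' : pairKey G φ i₀ j₀ p = pairKey G φ i₀ j₀ p') :
    edgeProd G F ((V2 S).erase (i₀, j₀, a₀, b₀)) (updPair φ a₀ b₀ p) =
      edgeProd G F ((V2 S).erase (i₀, j₀, a₀, b₀)) (updPair φ a₀ b₀ p') := by
  refine prod_congr rfl fun q hq => congrArg (F q) ?_
  obtain ⟨hqe, hqV⟩ := mem_erase.mp hq
  have hlt := lt_of_mem_V2 hqV
  refine eCol_congr_of_regz G hlt.ne (regz_vCol_updPair_congr hij.ne hpp' _ _)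
    (regz_vCol_updPair_congr hij.ne hpp' _ _) ?_
  obtain ⟨k, l, c, d⟩ := q
  by_cases hu : (k, c) = (i₀, a₀) ∨ (k, c) = (j₀, b₀)
  · right
    have hA : (l, d) ≠ (i₀, a₀) := by grind
    have hB : (l, d) ≠ (j₀, b₀) := by grind
    exact ⟨updPair_apply_of_ne φ p hA hB, updPair_apply_of_ne φ p' hA hB⟩
  · left
    obtain ⟨hA, hB⟩ := not_or.mp hu
    exact ⟨updPair_apply_of_ne φ p hA hB, updPair_apply_of_ne φ p' hA hB⟩


lemma EPhi_resample_pair {w : ∀ i, Ω i → ℝ} (htot : ∀ i, ∑ x : Ω i, w i x = 1)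
    (i₀ j₀ : Fin r) (a₀ b₀ : Fin h) (f : PMap Ω h → ℝ) :
    EPhi Ω w h f =
      EPhi Ω w h fun φ => ∑ p : Ω i₀ × Ω j₀, pairWeight w i₀ j₀ p * f (updPair φ a₀ b₀ p) := by
  rw [EPhi_resample htot i₀ a₀, EPhi_resample htot j₀ b₀]
  simp only [updPair, pairWeight, Fintype.sum_prod_type, mul_sum]
  rw [EPhi, EPhi]
  refine sum_congr rfl fun φ _ => congrArg _ (sum_comm.trans ?_)
  exact sum_congr rfl fun x _ => sum_congr rfl fun y _ => by ring

/-- Resample the two endpoints of `e₀`, then replace `anchorFun` by its conditional expectation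
given the frame colors in `G/φ`: the rest of the integrand only sees the endpoints through
those colors. -/
lemma EPhi_countIntegrand_eq {w : ∀ i, Ω i → ℝ} (hw : ∀ i x, 0 ≤ w i x)
    (htot : ∀ i, ∑ x : Ω i, w i x = 1) (he₀ : (i₀, j₀, a₀, b₀) ∈ V2 S)
    (F : Fin r × Fin r × Fin h × Fin h → K₂ → ℝ) :
    EPhi Ω w h (countIntegrand G S F) = ∑ z : PMap Ω h × (Ω i₀ × Ω j₀),
      pmapWeight Ω w z.1 * otherVertexInd G S i₀ a₀ j₀ b₀ z.1 *
          (pairWeight w i₀ j₀ z.2 * frameInd G S a₀ b₀ z.2) *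
        edgeProd G F ((V2 S).erase (i₀, j₀, a₀, b₀)) (updPair z.1 a₀ b₀ z.2) *
        fiberAvg (pairWeight w i₀ j₀) (pairKey G z.1 i₀ j₀) (anchorFun G S F a₀ b₀) z.2 := by
  have hg : ∀ (φ : PMap Ω h) p, frameInd G S a₀ b₀ p *
      fiberAvg (pairWeight w i₀ j₀) (pairKey G φ i₀ j₀) (anchorFun G S F a₀ b₀) p =
        fiberAvg (pairWeight w i₀ j₀) (pairKey G φ i₀ j₀) (anchorFun G S F a₀ b₀) p :=
    fun φ p => by
    rcases frameInd_eq_zero_or_one (G := G) (S := S) (a₀ := a₀) (b₀ := b₀) p with h0 | h1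
    · rw [h0, zero_mul, eq_comm]
      exact fiberAvg_eq_zero fun p' hp' => by
        rw [anchorFun, frameInd_eq_of_pairKey_eq hp', h0, mul_zero]
    · rw [h1, one_mul]
  rw [EPhi_resample_pair htot i₀ j₀ a₀ b₀, EPhi, Fintype.sum_prod_type]
  refine sum_congr rfl fun φ _ => ?_
  simp only [countIntegrand_updPair he₀, ← mul_assoc (pairWeight w i₀ j₀ _)]
  rw [← sum_mul_fiberAvg_mul (κ := pairKey G φ i₀ j₀) (pairWeight_nonneg hw i₀ j₀) _
    (fun p => edgeProd G F ((V2 S).erase (i₀, j₀, a₀, b₀)) (updPair φ a₀ b₀ p) *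
      otherVertexInd G S i₀ a₀ j₀ b₀ φ)
    fun p p' hpp' => by rw [edgeProd_updPair_congr (lt_of_mem_V2 he₀) F hpp'], mul_sum]
  refine sum_congr rfl fun p _ => ?_
  conv_lhs => rw [← hg φ p]
  ring

lemma sq_EPhi_countIntegrand_le {w : ∀ i, Ω i → ℝ} (hw : ∀ i x, 0 ≤ w i x)
    (htot : ∀ i, ∑ x : Ω i, w i x = 1) (he₀ : (i₀, j₀, a₀, b₀) ∈ V2 S)
    {F : Fin r × Fin r × Fin h × Fin h → K₂ → ℝ}
    (hF : ∀ q ∈ V2 S, ∀ c ∈ G.C2 q.1 q.2.1, |F q c| ≤ 1) :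
    EPhi Ω w h (countIntegrand G S F) ^ 2 ≤
      (EPhi Ω w h (otherVertexInd G S i₀ a₀ j₀ b₀) *
          ∑ p, pairWeight w i₀ j₀ p * frameInd G S a₀ b₀ p) *
        EPhi Ω w h fun φ => otherVertexInd G S i₀ a₀ j₀ b₀ φ *
          frameMeanSq G w φ i₀ j₀ (anchorFun G S F a₀ b₀) := by
  set A : PMap Ω h × (Ω i₀ × Ω j₀) → ℝ := fun z =>
    pmapWeight Ω w z.1 * otherVertexInd G S i₀ a₀ j₀ b₀ z.1 *
      (pairWeight w i₀ j₀ z.2 * frameInd G S a₀ b₀ z.2)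
  set g : PMap Ω h × (Ω i₀ × Ω j₀) → ℝ := fun z =>
    fiberAvg (pairWeight w i₀ j₀) (pairKey G z.1 i₀ j₀) (anchorFun G S F a₀ b₀) z.2
  set R : PMap Ω h × (Ω i₀ × Ω j₀) → ℝ := fun z =>
    edgeProd G F ((V2 S).erase (i₀, j₀, a₀, b₀)) (updPair z.1 a₀ b₀ z.2)
  have hA : ∀ z, 0 ≤ A z := fun z => mul_nonneg (mul_nonneg (pmapWeight_nonneg hw z.1)
    (prod_vertexInd_nonneg _ z.1))
    (mul_nonneg (pairWeight_nonneg hw i₀ j₀ z.2) (frameInd_nonneg z.2))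
  have hR : ∀ z, R z ^ 2 ≤ 1 := fun z => by
    rw [← sq_abs]
    exact pow_le_one₀ (abs_nonneg _)
      (abs_edgeProd_le_one (fun q hq => hF q (mem_of_mem_erase hq)) _)
  have hsumA : ∑ z, A z = EPhi Ω w h (otherVertexInd G S i₀ a₀ j₀ b₀) *
      ∑ p, pairWeight w i₀ j₀ p * frameInd G S a₀ b₀ p := by
    rw [Fintype.sum_prod_type, EPhi, sum_mul_sum]
  have hsumAg : ∑ z, A z * g z ^ 2 ≤ EPhi Ω w h fun φ => otherVertexInd G S i₀ a₀ j₀ b₀ φ *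
      frameMeanSq G w φ i₀ j₀ (anchorFun G S F a₀ b₀) := by
    rw [Fintype.sum_prod_type, EPhi]
    refine sum_le_sum fun φ _ => ?_
    rw [frameMeanSq, fiberAvgMeanSq, ← mul_assoc, mul_sum]
    refine sum_le_sum fun p _ => ?_
    have hweight : 0 ≤ pmapWeight Ω w φ * otherVertexInd G S i₀ a₀ j₀ b₀ φ * pairWeight w i₀ j₀ p :=
      mul_nonneg (mul_nonneg (pmapWeight_nonneg hw φ) (prod_vertexInd_nonneg _ φ))
        (pairWeight_nonneg hw i₀ j₀ p)
    calc A (φ, p) * g (φ, p) ^ 2 = pmapWeight Ω w φ * otherVertexInd G S i₀ a₀ j₀ b₀ φ *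
          pairWeight w i₀ j₀ p * (frameInd G S a₀ b₀ p * g (φ, p) ^ 2) := by ring
      _ ≤ pmapWeight Ω w φ * otherVertexInd G S i₀ a₀ j₀ b₀ φ *
          pairWeight w i₀ j₀ p * g (φ, p) ^ 2 :=
        mul_le_mul_of_nonneg_left (mul_le_of_le_one_left (sq_nonneg _) (frameInd_le_one p)) hweight
      _ = _ := by ring
  calc EPhi Ω w h (countIntegrand G S F) ^ 2 = (∑ z, A z * R z * g z) ^ 2 := by
        rw [EPhi_countIntegrand_eq hw htot he₀]
    _ ≤ (∑ z, A z * R z ^ 2) * ∑ z, A z * g z ^ 2 := sq_sum_weight_mul_mul_le _ hA _ _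
    _ ≤ (∑ z, A z) * ∑ z, A z * g z ^ 2 :=
        mul_le_mul_of_nonneg_right (sum_le_sum fun z _ => mul_le_of_le_one_right (hA z) (hR z))
          (sum_nonneg fun z _ => mul_nonneg (hA z) (sq_nonneg _))
    _ ≤ _ := by
        rw [hsumA]
        exact mul_le_mul_of_nonneg_left hsumAg (hsumA ▸ sum_nonneg fun z _ => hA z)

end Correlation

theorem mean_square_bounds_correlation_general {r : ℕ} (Ω : Fin r → Type)
    [∀ i, Fintype (Ω i)] (w : ∀ i, Ω i → ℝ)
    (hw : ∀ i x, 0 ≤ w i x) (htot : ∀ i, ∑ x : Ω i, w i x = 1)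
    {K₁ K₂ : Type} [Fintype K₁] [Fintype K₂] (G : CGraph Ω K₁ K₂)
    (h m : ℕ) (hm : 1 ≤ m)
    (S : SComplex r h K₁ K₂)
    (F : (Fin r × Fin r × Fin h × Fin h) → K₂ → ℝ)
    (hF : ∀ q ∈ V2 S, ∀ c ∈ G.C2 q.1 q.2.1, |F q c| ≤ 1)
    (i₀ j₀ : Fin r) (a₀ b₀ : Fin h) (he₀ : (i₀, j₀, a₀, b₀) ∈ V2 S) :
    (EPhi Ω w h (fun φ =>
        (∏ q ∈ V2 S, F q (G.eCol q.1 q.2.1 (φ q.1 q.2.2.1) (φ q.2.1 q.2.2.2))) *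
        ∏ p ∈ V1 S,
          (if some (G.vCol p.1 (φ p.1 p.2)) = S.vCol p.1 p.2 then (1 : ℝ) else 0))) ^ 2 ≤
      (EPhi Ω w (m * h) fun ψ =>
          ∑ x' : Ω i₀, ∑ y' : Ω j₀, w i₀ x' * w j₀ y' *
            (condEE Ω w i₀ j₀ (fun x y => frameRel Ω G ψ i₀ j₀ x y x' y')
              (fun x y => F (i₀, j₀, a₀, b₀) (G.eCol i₀ j₀ x y) *
                (if some (G.vCol i₀ x) = S.vCol i₀ a₀ ∧
                    some (G.vCol j₀ y) = S.vCol j₀ b₀ then (1 : ℝ) else 0))) ^ 2) *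
        ((∏ p ∈ V1 S, dVS Ω w G S p) *
          ((∏ p ∈ ((V1 S).erase (i₀, a₀)).erase (j₀, b₀), dVS Ω w G S p) + 1 / m)) := by
  obtain ⟨hA, hB⟩ := mem_V1_of_mem_V2 he₀
  have hrest : ((V1 S).erase (i₀, a₀)).erase (j₀, b₀) ⊆ V1 S :=
    (erase_subset _ _).trans (erase_subset _ _)
  have hstep₂ := EPhi_mul_frameMeanSq_le G hw htot hm (I := otherVertexInd G S i₀ a₀ j₀ b₀)
    (prod_vertexInd_nonneg _) (prod_vertexInd_le_one _) i₀ j₀ (anchorFun G S F a₀ b₀)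
  calc _ ≤ _ := sq_EPhi_countIntegrand_le hw htot he₀ hF
    _ ≤ _ := mul_le_mul_of_nonneg_left hstep₂ (mul_nonneg (EPhi_nonneg hw
          (prod_vertexInd_nonneg _)) (sum_nonneg fun p _ =>
          mul_nonneg (pairWeight_nonneg hw i₀ j₀ p) (frameInd_nonneg p)))
    _ = _ := by
        simp only [sum_condEE_sq_eq_frameMeanSq]
        unfold otherVertexInd
        rw [EPhi_prod_vertexInd htot hrest, sum_pairWeight_mul_frameInd w hA (mem_of_mem_erase hB),
          ← mul_prod_erase _ _ hA, ← mul_prod_erase _ _ hB]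
        unfold anchorFun frameInd
        ring

/-- Lemma: mean square bounds correlation, eq. (11). For `S ∈ S_{h,G}`,
functions `F_e : C_I(G) → [−1,1]` for the visible edges, and a visible edge
`e₀ = {(i₀,a₀),(j₀,b₀)} ∈ 𝕍_I(S)`:
`(E_{φ∈Φ(h)}[∏_{e∈𝕍₂(S)} F_e(φ(e)) ∏_{v∈𝕍₁(S)} 𝟙[G(φ(v))=S(v)]])² ≤
 E_{ψ∈Φ(mh)} E_{e*∈Ω_I}[(E_{e∈Ω_I}[F_{e₀}(e)·𝟙[G(∂e)=S(∂e₀)] | e ≈_{∂(G/ψ)} e*])²]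
 · (∏_{v∈𝕍₁(S)} d_G(S⟨v⟩)) · ((∏_{v∈𝕍₁(S), v∉e₀} d_G(S⟨v⟩)) + 1/m)`. -/
theorem mean_square_bounds_correlation {r : ℕ} (Ω : Fin r → Type)
    [∀ i, Fintype (Ω i)] [∀ i, Nonempty (Ω i)] (w : ∀ i, Ω i → ℝ)
    (hw : ∀ i x, 0 ≤ w i x) (htot : ∀ i, ∑ x : Ω i, w i x = 1)
    {K₁ K₂ : Type} [Fintype K₁] [Fintype K₂] (G : CGraph Ω K₁ K₂)
    (h m : ℕ) (hh : 1 ≤ h) (hm : 1 ≤ m)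
    (S : SComplex r h K₁ K₂) (hS : S.MemS G)
    (F : (Fin r × Fin r × Fin h × Fin h) → K₂ → ℝ)
    (hF : ∀ q ∈ V2 S, ∀ c ∈ G.C2 q.1 q.2.1, |F q c| ≤ 1)
    (i₀ j₀ : Fin r) (a₀ b₀ : Fin h) (he₀ : (i₀, j₀, a₀, b₀) ∈ V2 S) :
    (EPhi Ω w h (fun φ =>
        (∏ q ∈ V2 S, F q (G.eCol q.1 q.2.1 (φ q.1 q.2.2.1) (φ q.2.1 q.2.2.2))) *
        ∏ p ∈ V1 S,
          (if some (G.vCol p.1 (φ p.1 p.2)) = S.vCol p.1 p.2 then (1 : ℝ) else 0))) ^ 2 ≤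
      (EPhi Ω w (m * h) fun ψ =>
          ∑ x' : Ω i₀, ∑ y' : Ω j₀, w i₀ x' * w j₀ y' *
            (condEE Ω w i₀ j₀ (fun x y => frameRel Ω G ψ i₀ j₀ x y x' y')
              (fun x y => F (i₀, j₀, a₀, b₀) (G.eCol i₀ j₀ x y) *
                (if some (G.vCol i₀ x) = S.vCol i₀ a₀ ∧
                    some (G.vCol j₀ y) = S.vCol j₀ b₀ then (1 : ℝ) else 0))) ^ 2) *
        ((∏ p ∈ V1 S, dVS Ω w G S p) *
          ((∏ p ∈ ((V1 S).erase (i₀, a₀)).erase (j₀, b₀), dVS Ω w G S p) + 1 / m)) :=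
  mean_square_bounds_correlation_general Ω w hw htot G h m hm S F hF i₀ j₀ a₀ b₀ he₀
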